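/- arXiv:math/0609344 — 4 statements merged into one kernel-verified Lean document; each statement's English description precedes it below -/
import Mathlib

section
/- Let T > 0 and C ≥ 0. Suppose f : [0,T] → ℝ is continuous and nonnegative and satisfies f(t) ≤ C ∫₀ᵗ (t−s)^{−3/4} f(s) ds for every t ∈ [0,T]. Then f(t) = 0 for all t ∈ [0,T]. (This singular Gronwall lemma is proved by the iteration argument in the proof of Theorem 2.6: iterating the inequality twice improves the kernel (t−s)^{−3/4} to (t−s)^{−1/2} and then to a bounded kernel, after which the classical Gronwall inequality applies.) -/
open MeasureTheory intervalIntegral Set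

lemma kernelInt (a t : ℝ) :
    IntervalIntegrable (fun s => (t - s) ^ (-(3/4:ℝ))) volume a t := by
  simpa using (intervalIntegrable_rpow' (by norm_num : (-1:ℝ) < -(3/4))
    (a := t - a) (b := t - t)).comp_sub_left t

lemma kernelVal {a t : ℝ} (h : a ≤ t) :
    (∫ s in a..t, (t - s) ^ (-(3/4:ℝ))) = 4 * (t - a) ^ ((1:ℝ)/4) := by
  rw [intervalIntegral.integral_comp_sub_left (fun u => u ^ (-(3/4:ℝ))) t,
    integral_rpow (Or.inl (by norm_num))]
  rw [sub_self]
  norm_num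
  ring

lemma prodInt {f : ℝ → ℝ} {T M a t : ℝ} (hf : ContinuousOn f (Icc 0 T))
    (hM : ∀ s ∈ Icc (0:ℝ) T, |f s| ≤ M)
    (ha : 0 ≤ a) (hat : a ≤ t) (htT : t ≤ T) :
    IntervalIntegrable (fun s => (t - s) ^ (-(3/4:ℝ)) * f s) volume a t := by
  have hsub : Ioc a t ⊆ Icc 0 T := fun s hs => ⟨ha.trans hs.1.le, hs.2.trans htT⟩
  rw [intervalIntegrable_iff_integrableOn_Ioc_of_le hat]
  have hK : IntegrableOn (fun s => M * (t - s) ^ (-(3/4:ℝ))) (Ioc a t) := by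
    rw [← intervalIntegrable_iff_integrableOn_Ioc_of_le hat] at *
    exact (kernelInt a t).const_mul M
  refine Integrable.mono' hK ?_ ?_
  · apply AEStronglyMeasurable.mul
    · exact (by fun_prop : Measurable (fun s : ℝ => (t - s) ^ (-(3/4:ℝ)))).aestronglyMeasurable
    · exact ((hf.mono hsub).aemeasurable measurableSet_Ioc).aestronglyMeasurable
  · filter_upwards [ae_restrict_mem measurableSet_Ioc] with s hs
    have h1 : (0:ℝ) ≤ (t - s) ^ (-(3/4:ℝ)) := Real.rpow_nonneg (by linarith [hs.2]) _
    rw [Real.norm_eq_abs, abs_mul, abs_of_nonneg h1, mul_comm M]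
    exact mul_le_mul_of_nonneg_left (hM s (hsub hs)) h1

set_option maxHeartbeats 1000000 in
/-- The singular Gronwall lemma from the uniqueness proof of Theorem 2.6:
if a continuous nonnegative `f` on `[0,T]` satisfies
`f t ≤ C ∫₀ᵗ (t-s)^{-3/4} f s ds`, then `f ≡ 0` on `[0,T]`. -/
theorem singular_gronwall_three_quarters (T C : ℝ) (hT : 0 < T) (hC : 0 ≤ C)
    (f : ℝ → ℝ) (hf : ContinuousOn f (Icc 0 T))
    (hnn : ∀ t ∈ Icc (0:ℝ) T, 0 ≤ f t)
    (hineq : ∀ t ∈ Icc (0:ℝ) T,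
      f t ≤ C * ∫ s in (0:ℝ)..t, (t - s) ^ (-(3/4 : ℝ)) * f s) :
    ∀ t ∈ Icc (0:ℝ) T, f t = 0 := by
  obtain ⟨M, hM⟩ := isCompact_Icc.exists_bound_of_continuousOn hf
  simp only [Real.norm_eq_abs] at hM
  obtain ⟨D, hD0, hDC, hεx⟩ : ∃ D, 0 < D ∧ C ≤ D ∧
      ∃ ε, 0 < ε ∧ D * (4 * ε ^ ((1:ℝ)/4)) = 1/2 := by
    refine ⟨C + 1, by positivity, by linarith, ((8 * (C+1))⁻¹) ^ (4:ℕ), by positivity, ?_⟩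
    have hεr : (((8 * (C+1))⁻¹) ^ (4:ℕ)) ^ ((1:ℝ)/4) = (8 * (C+1))⁻¹ := by
      rw [← Real.rpow_natCast ((8*(C+1))⁻¹) 4, ← Real.rpow_mul (by positivity)]
      norm_num
    rw [hεr]
    field_simp
    ring
  obtain ⟨ε, hε0, hεq⟩ := hεx
  -- key step
  have key : ∀ a b : ℝ, 0 ≤ a → a ≤ b → b ≤ T → b - a ≤ ε →
      (∀ t ∈ Icc (0:ℝ) a, f t = 0) → ∀ t ∈ Icc (0:ℝ) b, f t = 0 := by
    intro a b ha hab hbT hba h0 t ht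
    have hsubIcc : Icc a b ⊆ Icc 0 T := Icc_subset_Icc ha hbT
    obtain ⟨u, hu, hmax⟩ := isCompact_Icc.exists_isMaxOn (nonempty_Icc.2 hab)
      (hf.mono hsubIcc)
    set m := f u with hm
    have huT : u ∈ Icc (0:ℝ) T := hsubIcc hu
    have hm0 : 0 ≤ m := hnn u huT
    have hau : a ≤ u := hu.1
    -- split integral
    have hint₁ : IntervalIntegrable (fun s => (u - s) ^ (-(3/4:ℝ)) * f s) volume 0 a :=
      (prodInt hf hM le_rfl (ha.trans hau) huT.2).mono_set
        (by rw [uIcc_of_le ha, uIcc_of_le (ha.trans hau)]; exact Icc_subset_Icc le_rfl hau)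
    have hint₂ : IntervalIntegrable (fun s => (u - s) ^ (-(3/4:ℝ)) * f s) volume a u :=
      prodInt hf hM ha hau huT.2
    have hzero : (∫ s in (0:ℝ)..a, (u - s) ^ (-(3/4:ℝ)) * f s) = 0 := by
      have heq : EqOn (fun s => (u - s) ^ (-(3/4:ℝ)) * f s) (fun _ => (0:ℝ)) (uIcc 0 a) := by
        intro s hs
        rw [uIcc_of_le ha] at hs
        simp [h0 s hs]
      rw [intervalIntegral.integral_congr heq, intervalIntegral.integral_zero]
    have hsplit : (∫ s in (0:ℝ)..u, (u - s) ^ (-(3/4:ℝ)) * f s)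
        = ∫ s in a..u, (u - s) ^ (-(3/4:ℝ)) * f s := by
      rw [← intervalIntegral.integral_add_adjacent_intervals hint₁ hint₂, hzero, zero_add]
    -- comparison
    have hcomp : (∫ s in a..u, (u - s) ^ (-(3/4:ℝ)) * f s)
        ≤ ∫ s in a..u, m * (u - s) ^ (-(3/4:ℝ)) := by
      apply intervalIntegral.integral_mono_on hau hint₂ ((kernelInt a u).const_mul m)
      intro s hs
      have hK : (0:ℝ) ≤ (u - s) ^ (-(3/4:ℝ)) := Real.rpow_nonneg (by linarith [hs.2]) _
      have hfs : f s ≤ m := hmax ⟨hs.1, hs.2.trans hu.2⟩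
      calc (u - s) ^ (-(3/4:ℝ)) * f s ≤ (u - s) ^ (-(3/4:ℝ)) * m :=
            mul_le_mul_of_nonneg_left hfs hK
        _ = m * (u - s) ^ (-(3/4:ℝ)) := mul_comm _ _
    have hval : (∫ s in a..u, m * (u - s) ^ (-(3/4:ℝ))) = m * (4 * (u - a) ^ ((1:ℝ)/4)) := by
      rw [intervalIntegral.integral_const_mul, kernelVal hau]
    have hnnI : 0 ≤ ∫ s in a..u, (u - s) ^ (-(3/4:ℝ)) * f s := by
      apply intervalIntegral.integral_nonneg hau
      intro s hs
      exact mul_nonneg (Real.rpow_nonneg (by linarith [hs.2]) _)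
        (hnn s ⟨ha.trans hs.1, hs.2.trans huT.2⟩)
    have hle : m ≤ m / 2 := by
      have h1 := hineq u huT
      rw [hsplit] at h1
      have h2 : C * (∫ s in a..u, (u - s) ^ (-(3/4:ℝ)) * f s)
          ≤ D * (∫ s in a..u, (u - s) ^ (-(3/4:ℝ)) * f s) :=
        mul_le_mul_of_nonneg_right hDC hnnI
      have h3 : D * (∫ s in a..u, (u - s) ^ (-(3/4:ℝ)) * f s)
          ≤ D * (m * (4 * (u - a) ^ ((1:ℝ)/4))) := by
        apply mul_le_mul_of_nonneg_left _ hD0.le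
        rw [← hval]; exact hcomp
      have h4 : (u - a) ^ ((1:ℝ)/4) ≤ ε ^ ((1:ℝ)/4) :=
        Real.rpow_le_rpow (by linarith) (by linarith [hu.2]) (by norm_num)
      have h5 : D * (m * (4 * (u - a) ^ ((1:ℝ)/4))) ≤ D * (m * (4 * ε ^ ((1:ℝ)/4))) := by
        apply mul_le_mul_of_nonneg_left _ hD0.le
        apply mul_le_mul_of_nonneg_left _ hm0
        linarith
      have h6 : D * (m * (4 * ε ^ ((1:ℝ)/4))) = m / 2 := by
        rw [show D * (m * (4 * ε ^ ((1:ℝ)/4))) = m * (D * (4 * ε ^ ((1:ℝ)/4))) by ring, hεq]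
        ring
      linarith
    have hmz : m = 0 := le_antisymm (by linarith) hm0
    rcases le_total t a with h | h
    · exact h0 t ⟨ht.1, h⟩
    · have : f t ≤ m := hmax ⟨h, ht.2⟩
      have := hnn t ⟨ht.1, ht.2.trans hbT⟩
      linarith [hmz ▸ ‹f t ≤ m›]
  -- induction
  have base : ∀ t ∈ Icc (0:ℝ) 0, f t = 0 := by
    intro t ht
    have : t = 0 := le_antisymm ht.2 ht.1
    subst this
    have h := hineq 0 ⟨le_rfl, hT.le⟩
    rw [intervalIntegral.integral_same, mul_zero] at h
    exact le_antisymm h (hnn 0 ⟨le_rfl, hT.le⟩)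
  have main : ∀ n : ℕ, ∀ t ∈ Icc (0:ℝ) (min (n * ε) T), f t = 0 := by
    intro n
    induction n with
    | zero =>
      intro t ht
      apply base
      simpa [min_eq_left hT.le] using ht
    | succ n ih =>
      apply key (min (n * ε) T) (min ((n + 1 : ℕ) * ε) T)
        (le_min (by positivity) hT.le)
        (min_le_min (by push_cast; nlinarith) le_rfl) (min_le_right _ _) _ ih
      rcases le_total T (n * ε) with h | h
      · rw [min_eq_right h, min_eq_right (by push_cast; nlinarith)]
        linarith
      · rw [min_eq_left h]
        have := min_le_left ((n + 1 : ℕ) * ε) T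
        push_cast at *
        nlinarith
  intro t ht
  obtain ⟨n, hn⟩ := exists_nat_ge (T / ε)
  have hTn : T ≤ n * ε := by
    rw [div_le_iff₀ hε0] at hn
    linarith
  exact main n t (by rwa [min_eq_right hTn])
end

section
/- Let ν > 0. There exist constants c₁ > 0 and c₂ > 0 such that for all t > 0 and all x, y ∈ [0,1]: |∂_y p_ν(t,x,y)| = |2π ∑_{k=1}^∞ k e^{−νπ²k²t} sin(kπx) cos(kπy)| ≤ (c₁ / t) · e^{−(x−y)² / (2 c₂ t)}. (Proposition A.3: Gaussian upper bound for the spatial gradient of the Dirichlet heat kernel on [0,1].) -/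
open MeasureTheory Set

/-- The `y`-derivative of the Dirichlet heat kernel on `[0,1]` for the operator `ν Δ`:
`∂_y p_ν(t,x,y) = 2π ∑_{k≥1} k e^{-νπ²k²t} sin(kπx) cos(kπy)`. -/
noncomputable def dyHeatKernel (ν t x y : ℝ) : ℝ :=
  2 * Real.pi * ∑' k : ℕ,
    ((k : ℝ) + 1) * Real.exp (-ν * Real.pi ^ 2 * ((k : ℝ) + 1) ^ 2 * t) *
      Real.sin (((k : ℝ) + 1) * Real.pi * x) * Real.cos (((k : ℝ) + 1) * Real.pi * y)

open Real HurwitzZeta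

namespace DyHKAux

noncomputable def q : ℝ := Real.exp (-(π/4))

lemma q_pos : 0 < q := Real.exp_pos _

lemma q_lt_one : q < 1 := by
  rw [q, Real.exp_lt_one_iff]
  nlinarith [Real.pi_pos]

noncomputable def w (n : ℤ) : ℝ := q ^ (n.natAbs - 1)

lemma w_nonneg (n : ℤ) : 0 ≤ w n := pow_nonneg q_pos.le _

lemma summable_w : Summable w := by
  have hgeo : Summable (fun n : ℕ ↦ q ^ n) := summable_geometric_of_lt_one q_pos.le q_lt_one
  apply Summable.of_nat_of_neg_add_one
  · refine Summable.of_nonneg_of_le (fun n ↦ w_nonneg _) (fun n ↦ ?_) (hgeo.mul_left q⁻¹)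
    show q ^ ((n : ℤ).natAbs - 1) ≤ q⁻¹ * q ^ n
    rw [Int.natAbs_natCast]
    cases n with
    | zero => simpa using (one_le_inv₀ q_pos).mpr q_lt_one.le
    | succ m =>
      rw [Nat.succ_sub_one, pow_succ]
      refine le_of_eq ?_
      rw [mul_comm (q ^ m) q, ← mul_assoc, inv_mul_cancel₀ q_pos.ne', one_mul]
  · refine hgeo.congr (fun n ↦ ?_)
    show q ^ n = q ^ ((-((n : ℤ) + 1)).natAbs - 1)
    congr 1

noncomputable def Cz : ℝ := ∑' n : ℤ, w n

lemma Cz_nonneg : 0 ≤ Cz := tsum_nonneg w_nonneg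


/-- `|v| e^{-v²/(2s)} ≤ √s`. -/
lemma abs_mul_exp_le {s : ℝ} (hs : 0 < s) (v : ℝ) :
    |v| * Real.exp (-v ^ 2 / (2 * s)) ≤ Real.sqrt s := by
  have h1 : v ^ 2 / s ≤ Real.exp (v ^ 2 / s) := by
    have := Real.add_one_le_exp (v ^ 2 / s); linarith
  have h2 : v ^ 2 ≤ s * Real.exp (v ^ 2 / s) := by
    calc v ^ 2 = s * (v ^ 2 / s) := by field_simp
    _ ≤ s * Real.exp (v ^ 2 / s) := by gcongr
  have h3 : |v| ≤ Real.sqrt s * Real.exp (v ^ 2 / (2 * s)) := by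
    calc |v| = Real.sqrt (v ^ 2) := (Real.sqrt_sq_eq_abs v).symm
    _ ≤ Real.sqrt (s * Real.exp (v ^ 2 / s)) := Real.sqrt_le_sqrt h2
    _ = Real.sqrt s * Real.exp (v ^ 2 / (2 * s)) := by
        rw [Real.sqrt_mul hs.le, ← Real.exp_half]
        congr 1
        ring
  calc |v| * Real.exp (-v ^ 2 / (2 * s))
      ≤ (Real.sqrt s * Real.exp (v ^ 2 / (2 * s))) * Real.exp (-v ^ 2 / (2 * s)) := by
        gcongr
    _ = Real.sqrt s := by
        rw [mul_assoc, ← Real.exp_add,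
          show v ^ 2 / (2 * s) + -v ^ 2 / (2 * s) = 0 by ring, Real.exp_zero, mul_one]

/-- Cast estimate: `natAbs n - 1 ≤ |n + a|` when `|a| ≤ 1`. -/
lemma natAbs_sub_one_le {a : ℝ} (ha : |a| ≤ 1) (n : ℤ) :
    ((n.natAbs - 1 : ℕ) : ℝ) ≤ |(n : ℝ) + a| := by
  rcases Nat.eq_zero_or_pos n.natAbs with h | h
  · simp [h]
  · rw [Nat.cast_sub h]
    have habs : ((n.natAbs : ℕ) : ℝ) = |(n : ℝ)| := by
      rw [Nat.cast_natAbs]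
      norm_num
    rw [habs, Nat.cast_one]
    have := abs_sub_abs_le_abs_sub (n : ℝ) (-a)
    rw [abs_neg, sub_neg_eq_add] at this
    linarith

/-- Main termwise bound for the image sum. -/
lemma term_bound {a s δ : ℝ} (ha : |a| ≤ 1) (hs : 0 < s) (hs1 : s ≤ 1) (hδ : 0 ≤ δ)
    (hd : ∀ n : ℤ, δ ≤ |(n : ℝ) + a|) (n : ℤ) :
    |((n : ℝ) + a) * Real.exp (-π * ((n : ℝ) + a) ^ 2 * (1 / s))| ≤
      Real.sqrt s * Real.exp (-(π * δ ^ 2) / (4 * s)) * w n := by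
  set v : ℝ := (n : ℝ) + a with hv
  set m : ℕ := n.natAbs - 1 with hm
  have hvd : δ ≤ |v| := hd n
  have hsplit : Real.exp (-π * v ^ 2 * (1 / s)) =
      Real.exp (-(π * v ^ 2) / (2 * s)) *
        (Real.exp (-(π * v ^ 2) / (4 * s)) * Real.exp (-(π * v ^ 2) / (4 * s))) := by
    rw [← Real.exp_add, ← Real.exp_add]
    congr 1
    field_simp
    ring
  have hb1 : |v| * Real.exp (-(π * v ^ 2) / (2 * s)) ≤ Real.sqrt s := by
    have hmono : Real.exp (-(π * v ^ 2) / (2 * s)) ≤ Real.exp (-v ^ 2 / (2 * s)) := by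
      rw [Real.exp_le_exp, div_le_div_iff_of_pos_right (by positivity : (0:ℝ) < 2 * s)]
      nlinarith [sq_nonneg v, Real.pi_gt_three]
    calc |v| * Real.exp (-(π * v ^ 2) / (2 * s)) ≤ |v| * Real.exp (-v ^ 2 / (2 * s)) :=
          mul_le_mul_of_nonneg_left hmono (abs_nonneg v)
    _ ≤ Real.sqrt s := abs_mul_exp_le hs v
  have hb2 : Real.exp (-(π * v ^ 2) / (4 * s)) ≤ Real.exp (-(π * δ ^ 2) / (4 * s)) := by
    rw [Real.exp_le_exp, div_le_div_iff_of_pos_right (by positivity : (0:ℝ) < 4 * s),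
      neg_le_neg_iff]
    have : δ ^ 2 ≤ v ^ 2 := by
      rw [← sq_abs v]
      exact pow_le_pow_left₀ hδ hvd 2
    nlinarith [Real.pi_pos]
  have hb3 : Real.exp (-(π * v ^ 2) / (4 * s)) ≤ w n := by
    have hmv : (m : ℝ) ≤ |v| := natAbs_sub_one_le ha n
    have hm2 : (m : ℝ) ≤ v ^ 2 := by
      have h1 : (m : ℝ) ≤ (m : ℝ) ^ 2 := by
        have := Nat.le_self_pow (two_ne_zero) m
        exact_mod_cast this
      have h2 : (m : ℝ) ^ 2 ≤ v ^ 2 := by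
        rw [← sq_abs v]
        exact pow_le_pow_left₀ (Nat.cast_nonneg m) hmv 2
      linarith
    calc Real.exp (-(π * v ^ 2) / (4 * s)) ≤ Real.exp (-(π * v ^ 2) / 4) := by
          rw [Real.exp_le_exp, neg_div, neg_div, neg_le_neg_iff,
            div_eq_mul_one_div (π * v ^ 2) 4, div_eq_mul_one_div (π * v ^ 2) (4 * s)]
          refine mul_le_mul_of_nonneg_left ?_ (by positivity)
          exact one_div_le_one_div_of_le (by positivity) (by linarith)
    _ ≤ Real.exp (-(π * m) / 4) := by
          rw [Real.exp_le_exp, neg_div, neg_div, neg_le_neg_iff,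
            div_le_div_iff_of_pos_right (by norm_num : (0:ℝ) < 4)]
          exact mul_le_mul_of_nonneg_left hm2 Real.pi_pos.le
    _ = w n := by
          rw [w, q, ← hm, ← Real.exp_nat_mul]
          congr 1
          ring
  calc |v * Real.exp (-π * v ^ 2 * (1 / s))|
      = (|v| * Real.exp (-(π * v ^ 2) / (2 * s))) *
        (Real.exp (-(π * v ^ 2) / (4 * s)) * Real.exp (-(π * v ^ 2) / (4 * s))) := by
        rw [abs_mul, Real.abs_exp, hsplit]
        ring
    _ ≤ Real.sqrt s * (Real.exp (-(π * δ ^ 2) / (4 * s)) * w n) := by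
        have h0 : (0:ℝ) ≤ Real.exp (-(π * v ^ 2) / (4 * s)) := (Real.exp_pos _).le
        exact mul_le_mul hb1 (mul_le_mul hb2 hb3 h0 (Real.exp_pos _).le)
          (by positivity) (Real.sqrt_nonneg s)
    _ = Real.sqrt s * Real.exp (-(π * δ ^ 2) / (4 * s)) * w n := by ring


set_option maxHeartbeats 1000000 in
lemma sinKernel_bound {a s δ : ℝ} (ha : |a| ≤ 1) (hs : 0 < s) (hs1 : s ≤ 1) (hδ : 0 ≤ δ)
    (hd : ∀ n : ℤ, δ ≤ |(n : ℝ) + a|) :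
    |sinKernel ↑a s| ≤ Cz / s * Real.exp (-(π * δ ^ 2) / (4 * s)) := by
  have hx : 0 < 1 / s := by positivity
  have hodd := hasSum_int_oddKernel a hx
  have hsummable := hodd.summable
  have habs : Summable (fun n : ℤ ↦
      |((n : ℝ) + a) * Real.exp (-π * ((n : ℝ) + a) ^ 2 * (1 / s))|) := hsummable.abs
  -- bound the odd kernel
  have h1 : |oddKernel ↑a (1 / s)| ≤
      Real.sqrt s * Real.exp (-(π * δ ^ 2) / (4 * s)) * Cz := by
    rw [← hodd.tsum_eq]
    calc |∑' n : ℤ, ((n : ℝ) + a) * Real.exp (-π * ((n : ℝ) + a) ^ 2 * (1 / s))|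
        ≤ ∑' n : ℤ, |((n : ℝ) + a) * Real.exp (-π * ((n : ℝ) + a) ^ 2 * (1 / s))| := by
          simpa only [Real.norm_eq_abs] using
            norm_tsum_le_tsum_norm
              (f := fun n : ℤ ↦ ((n : ℝ) + a) * Real.exp (-π * ((n : ℝ) + a) ^ 2 * (1 / s)))
              (by simpa only [Real.norm_eq_abs] using habs)
      _ ≤ ∑' n : ℤ, Real.sqrt s * Real.exp (-(π * δ ^ 2) / (4 * s)) * w n :=
          Summable.tsum_le_tsum (term_bound ha hs hs1 hδ hd) habs (summable_w.mul_left _)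
      _ = Real.sqrt s * Real.exp (-(π * δ ^ 2) / (4 * s)) * Cz := tsum_mul_left
  -- functional equation
  have hfe := oddKernel_functional_equation ↑a (1 / s)
  rw [one_div_one_div] at hfe
  have hp : (0 : ℝ) < (1 / s) ^ ((3:ℝ) / 2) := Real.rpow_pos_of_pos hx _
  have hsin : sinKernel ↑a s = (1 / s) ^ ((3:ℝ) / 2) * oddKernel ↑a (1 / s) := by
    rw [hfe, ← mul_assoc, mul_one_div, div_self hp.ne', one_mul]
  have hpow : (1 / s) ^ ((3:ℝ) / 2) * Real.sqrt s = 1 / s := by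
    rw [show ((3:ℝ)/2) = 1 + 1/2 by norm_num, Real.rpow_add hx, Real.rpow_one,
      Real.sqrt_eq_rpow, mul_assoc, ← Real.mul_rpow (le_of_lt hx) hs.le, one_div,
      inv_mul_cancel₀ hs.ne', Real.one_rpow, mul_one]
  calc |sinKernel ↑a s| = (1 / s) ^ ((3:ℝ) / 2) * |oddKernel ↑a (1 / s)| := by
        rw [hsin, abs_mul, abs_of_pos hp]
    _ ≤ (1 / s) ^ ((3:ℝ) / 2) *
        (Real.sqrt s * Real.exp (-(π * δ ^ 2) / (4 * s)) * Cz) :=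
        mul_le_mul_of_nonneg_left h1 hp.le
    _ = ((1 / s) ^ ((3:ℝ) / 2) * Real.sqrt s) * Real.exp (-(π * δ ^ 2) / (4 * s)) * Cz := by
        ring
    _ = (1 / s) * Real.exp (-(π * δ ^ 2) / (4 * s)) * Cz := by rw [hpow]
    _ = Cz / s * Real.exp (-(π * δ ^ 2) / (4 * s)) := by ring


lemma dist_int_bound {a δ : ℝ} (hδ : 0 ≤ δ) (h0 : 0 ≤ a) (h1 : δ ≤ a) (h2 : δ ≤ 1 - a)
    (n : ℤ) : δ ≤ |(n : ℝ) + a| := by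
  rcases le_or_gt 0 n with hn | hn
  · have hn' : (0:ℝ) ≤ (n:ℝ) := by exact_mod_cast hn
    rw [abs_of_nonneg (by linarith)]
    linarith
  · have hn1 : n ≤ -1 := by omega
    have hn' : (n:ℝ) ≤ -1 := by exact_mod_cast hn1
    rw [abs_of_nonpos (by linarith)]
    linarith

noncomputable def Cg : ℝ := ∑' k : ℕ, Real.exp (-((k : ℝ) + 1) / 2)

lemma summable_cg : Summable (fun k : ℕ ↦ Real.exp (-((k : ℝ) + 1) / 2)) := by
  have hgeo : Summable (fun k : ℕ ↦ Real.exp (-(1:ℝ)/2) ^ k * Real.exp (-(1:ℝ)/2)) :=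
    (summable_geometric_of_lt_one (Real.exp_pos _).le
      (by rw [Real.exp_lt_one_iff]; norm_num)).mul_right _
  refine hgeo.congr fun k ↦ ?_
  rw [← Real.exp_nat_mul, ← Real.exp_add]
  congr 1
  ring

lemma Cg_nonneg : 0 ≤ Cg := tsum_nonneg fun _ ↦ (Real.exp_pos _).le

lemma hasSum_shift (a : ℝ) {s : ℝ} (hs : 0 < s) :
    HasSum (fun k : ℕ ↦ 2 * ((k:ℝ) + 1) * Real.sin (2 * π * a * ((k:ℝ) + 1)) *
      Real.exp (-π * ((k:ℝ) + 1) ^ 2 * s)) (sinKernel ↑a s) := by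
  have h := hasSum_nat_sinKernel a hs
  have h' := (hasSum_nat_add_iff'
    (f := fun n : ℕ ↦ 2 * (n:ℝ) * Real.sin (2 * π * a * (n:ℝ)) *
      Real.exp (-π * (n:ℝ) ^ 2 * s)) 1).mpr h
  simp only [Finset.range_one, Finset.sum_singleton, Nat.cast_zero, mul_zero, zero_mul,
    sub_zero] at h'
  exact h'.congr_fun fun k ↦ by push_cast; ring_nf

lemma hasSum_dyHK {ν t : ℝ} (x y : ℝ) (hν : 0 < ν) (ht : 0 < t) :
    HasSum (fun k : ℕ ↦ ((k : ℝ) + 1) * Real.exp (-ν * π ^ 2 * ((k : ℝ) + 1) ^ 2 * t) *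
      Real.sin (((k : ℝ) + 1) * π * x) * Real.cos (((k : ℝ) + 1) * π * y))
      ((sinKernel ↑((x + y)/2) (ν * π * t) + sinKernel ↑((x - y)/2) (ν * π * t)) / 4) := by
  have hs : 0 < ν * π * t := by positivity
  have h₁ := hasSum_shift ((x + y)/2) hs
  have h₂ := hasSum_shift ((x - y)/2) hs
  refine ((h₁.add h₂).div_const 4).congr_fun fun k ↦ ?_
  rw [show 2 * π * ((x + y)/2) * ((k:ℝ) + 1)
        = (((k:ℝ) + 1) * π * x) + (((k:ℝ) + 1) * π * y) by ring,
    show 2 * π * ((x - y)/2) * ((k:ℝ) + 1)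
        = (((k:ℝ) + 1) * π * x) - (((k:ℝ) + 1) * π * y) by ring,
    Real.sin_add, Real.sin_sub,
    show -π * ((k:ℝ) + 1) ^ 2 * (ν * π * t) = -ν * π ^ 2 * ((k:ℝ) + 1) ^ 2 * t by ring]
  ring

end DyHKAux


set_option maxHeartbeats 1000000 in
open Real HurwitzZeta DyHKAux in
/-- Proposition A.3: Gaussian upper bound for the spatial gradient of the Dirichlet heat
kernel on `[0,1]`: there are `c₁, c₂ > 0` with
`|∂_y p_ν(t,x,y)| ≤ (c₁/t) e^{-(x-y)²/(2c₂t)}` for all `t > 0` and `x, y ∈ [0,1]`. -/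
theorem dyHeatKernel_gaussian_bound (ν : ℝ) (hν : 0 < ν) :
    ∃ c₁ > (0:ℝ), ∃ c₂ > (0:ℝ), ∀ t > (0:ℝ), ∀ x ∈ Icc (0:ℝ) 1, ∀ y ∈ Icc (0:ℝ) 1,
      |dyHeatKernel ν t x y| ≤ c₁ / t * Real.exp (-(x - y) ^ 2 / (2 * c₂ * t)) := by
  have hCz : 0 ≤ Cz / ν := div_nonneg Cz_nonneg hν.le
  have hCg : 0 ≤ 8 * Real.exp 1 * Cg / (ν * π) := by
    apply div_nonneg _ (by positivity)
    have := Cg_nonneg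
    positivity
  set c₁ : ℝ := Cz / ν + 8 * Real.exp 1 * Cg / (ν * π) + 1 with hc₁def
  have hc₁pos : 0 < c₁ := by rw [hc₁def]; linarith
  refine ⟨c₁, hc₁pos, 8 * ν, by positivity, ?_⟩
  intro t ht x hx y hy
  obtain ⟨hx0, hx1⟩ := hx
  obtain ⟨hy0, hy1⟩ := hy
  have hs : 0 < ν * π * t := by positivity
  have hF := hasSum_dyHK (ν := ν) (t := t) x y hν ht
  have hdk : dyHeatKernel ν t x y = 2 * π *
      ((sinKernel ↑((x + y)/2) (ν * π * t) + sinKernel ↑((x - y)/2) (ν * π * t)) / 4) := by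
    unfold dyHeatKernel
    rw [hF.tsum_eq]
  rcases le_or_gt (ν * π * t) 1 with hsmall | hlarge
  · -- small time regime, use the theta functional equation
    set δ : ℝ := |x - y| / 2 with hδdef
    have hδ0 : 0 ≤ δ := by positivity
    have hxy1 : |x - y| ≤ 1 := abs_le.mpr ⟨by linarith, by linarith⟩
    have hE : Real.exp (-(π * δ ^ 2) / (4 * (ν * π * t)))
        = Real.exp (-(x - y) ^ 2 / (2 * (8 * ν) * t)) := by
      congr 1
      have hδsq : δ ^ 2 = (x - y) ^ 2 / 4 := by
        rw [hδdef, div_pow, sq_abs]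
        norm_num
      rw [hδsq]
      field_simp
      ring
    have hb1 : |sinKernel ↑((x + y)/2) (ν * π * t)| ≤
        Cz / (ν * π * t) * Real.exp (-(π * δ ^ 2) / (4 * (ν * π * t))) := by
      have hsum1 : |x - y| ≤ x + y := abs_le.mpr ⟨by linarith, by linarith⟩
      have hsum2 : |x - y| ≤ 2 - (x + y) := abs_le.mpr ⟨by linarith, by linarith⟩
      exact sinKernel_bound (abs_le.mpr ⟨by linarith, by linarith⟩) hs hsmall hδ0
        (dist_int_bound hδ0 (by linarith) (by rw [hδdef]; linarith)
          (by rw [hδdef]; linarith)) 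
    have hb2' : |sinKernel ↑(|x - y|/2) (ν * π * t)| ≤
        Cz / (ν * π * t) * Real.exp (-(π * δ ^ 2) / (4 * (ν * π * t))) := by
      have habsnn : 0 ≤ |x - y| := abs_nonneg _
      exact sinKernel_bound (abs_le.mpr ⟨by linarith, by linarith⟩) hs hsmall hδ0
        (dist_int_bound hδ0 (by linarith) (le_of_eq hδdef) (by rw [hδdef]; linarith))
    have hb2 : |sinKernel ↑((x - y)/2) (ν * π * t)| ≤
        Cz / (ν * π * t) * Real.exp (-(π * δ ^ 2) / (4 * (ν * π * t))) := by
      rcases le_total y x with h | h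
      · rwa [abs_of_nonneg (by linarith : (0:ℝ) ≤ x - y)] at hb2'
      · rw [abs_of_nonpos (by linarith : x - y ≤ (0:ℝ))] at hb2'
        rwa [show (-(x - y))/2 = -((x - y)/2) by ring, QuotientAddGroup.mk_neg, sinKernel_neg,
          abs_neg] at hb2'
    calc |dyHeatKernel ν t x y|
        = 2 * π * (|sinKernel ↑((x + y)/2) (ν * π * t)
            + sinKernel ↑((x - y)/2) (ν * π * t)| / 4) := by
          rw [hdk, abs_mul, abs_div, abs_of_pos (by positivity : (0:ℝ) < 2 * π)]
          norm_num
      _ ≤ 2 * π * ((|sinKernel ↑((x + y)/2) (ν * π * t)|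
            + |sinKernel ↑((x - y)/2) (ν * π * t)|) / 4) := by
          gcongr
          exact abs_add_le _ _
      _ ≤ 2 * π * ((Cz / (ν * π * t) * Real.exp (-(π * δ ^ 2) / (4 * (ν * π * t)))
            + Cz / (ν * π * t) * Real.exp (-(π * δ ^ 2) / (4 * (ν * π * t)))) / 4) := by
          gcongr
      _ = (Cz / ν) / t * Real.exp (-(π * δ ^ 2) / (4 * (ν * π * t))) := by
          field_simp
          ring
      _ ≤ c₁ / t * Real.exp (-(π * δ ^ 2) / (4 * (ν * π * t))) := by
          gcongr
          rw [hc₁def]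
          linarith
      _ = c₁ / t * Real.exp (-(x - y) ^ 2 / (2 * (8 * ν) * t)) := by rw [hE]
  · -- large time regime, direct exponential bound
    have habsF : Summable (fun k : ℕ ↦
        |((k : ℝ) + 1) * Real.exp (-ν * π ^ 2 * ((k : ℝ) + 1) ^ 2 * t) *
          Real.sin (((k : ℝ) + 1) * π * x) * Real.cos (((k : ℝ) + 1) * π * y)|) :=
      hF.summable.abs
    have hπ3 : (3:ℝ) < π := Real.pi_gt_three
    have hX3 : (3:ℝ) < ν * π ^ 2 * t := by nlinarith [mul_pos hν ht, mul_pos (mul_pos hν ht) Real.pi_pos]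
    have hbound : ∀ k : ℕ,
        |((k : ℝ) + 1) * Real.exp (-ν * π ^ 2 * ((k : ℝ) + 1) ^ 2 * t) *
          Real.sin (((k : ℝ) + 1) * π * x) * Real.cos (((k : ℝ) + 1) * π * y)| ≤
        (2 * Real.exp (-(ν * π ^ 2 * t) / 2)) * Real.exp (-((k:ℝ) + 1) / 2) := by
      intro k
      have hK1 : (1:ℝ) ≤ (k:ℝ) + 1 := by
        have := Nat.cast_nonneg (α := ℝ) k
        linarith
      have step1 : |((k : ℝ) + 1) * Real.exp (-ν * π ^ 2 * ((k : ℝ) + 1) ^ 2 * t) *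
          Real.sin (((k : ℝ) + 1) * π * x) * Real.cos (((k : ℝ) + 1) * π * y)| ≤
          ((k:ℝ) + 1) * Real.exp (-ν * π ^ 2 * ((k : ℝ) + 1) ^ 2 * t) := by
        rw [abs_mul, abs_mul, abs_mul, abs_of_nonneg (by linarith : (0:ℝ) ≤ (k:ℝ) + 1),
          Real.abs_exp]
        calc ((k:ℝ) + 1) * Real.exp (-ν * π ^ 2 * ((k : ℝ) + 1) ^ 2 * t) *
            |Real.sin (((k : ℝ) + 1) * π * x)| * |Real.cos (((k : ℝ) + 1) * π * y)| ≤
            ((k:ℝ) + 1) * Real.exp (-ν * π ^ 2 * ((k : ℝ) + 1) ^ 2 * t) * 1 * 1 := by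
              gcongr
              · exact abs_sin_le_one _
              · exact abs_cos_le_one _
        _ = ((k:ℝ) + 1) * Real.exp (-ν * π ^ 2 * ((k : ℝ) + 1) ^ 2 * t) := by ring
      have hexp1 : (k:ℝ) + 1 ≤ 2 * Real.exp (((k:ℝ) + 1) / 2) := by
        have := Real.add_one_le_exp (((k:ℝ) + 1) / 2)
        linarith
      have hargle : -ν * π ^ 2 * ((k : ℝ) + 1) ^ 2 * t ≤
          -(ν * π ^ 2 * t) / 2 - ((k:ℝ) + 1) := by
        have h1 : (ν * π ^ 2 * t) / 2 + ((k:ℝ) + 1) ≤ ν * π ^ 2 * ((k : ℝ) + 1) ^ 2 * t := by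
          nlinarith [sq_nonneg ((k:ℝ) + 1 - 1), sq_nonneg ((k:ℝ) + 1)]
        linarith
      calc |((k : ℝ) + 1) * Real.exp (-ν * π ^ 2 * ((k : ℝ) + 1) ^ 2 * t) *
          Real.sin (((k : ℝ) + 1) * π * x) * Real.cos (((k : ℝ) + 1) * π * y)| ≤
          ((k:ℝ) + 1) * Real.exp (-ν * π ^ 2 * ((k : ℝ) + 1) ^ 2 * t) := step1
      _ ≤ (2 * Real.exp (((k:ℝ) + 1) / 2)) *
            Real.exp (-(ν * π ^ 2 * t) / 2 - ((k:ℝ) + 1)) := by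
          exact mul_le_mul hexp1 (Real.exp_le_exp.mpr hargle) (Real.exp_pos _).le
            (by positivity)
      _ = (2 * Real.exp (-(ν * π ^ 2 * t) / 2)) * Real.exp (-((k:ℝ) + 1) / 2) := by
          have hcomb : Real.exp (((k:ℝ) + 1) / 2) *
              Real.exp (-(ν * π ^ 2 * t) / 2 - ((k:ℝ) + 1)) =
              Real.exp (-(ν * π ^ 2 * t) / 2) * Real.exp (-((k:ℝ) + 1) / 2) := by
            rw [← Real.exp_add, ← Real.exp_add]
            congr 1
            ring
          rw [mul_assoc, hcomb, ← mul_assoc]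
    have key : |dyHeatKernel ν t x y| ≤
        2 * π * (2 * Real.exp (-(ν * π ^ 2 * t) / 2) * Cg) := by
      unfold dyHeatKernel
      rw [abs_mul, abs_of_pos (by positivity : (0:ℝ) < 2 * π)]
      have hnorm : |∑' k : ℕ, ((k : ℝ) + 1) * Real.exp (-ν * π ^ 2 * ((k : ℝ) + 1) ^ 2 * t) *
          Real.sin (((k : ℝ) + 1) * π * x) * Real.cos (((k : ℝ) + 1) * π * y)| ≤
          ∑' k : ℕ, |((k : ℝ) + 1) * Real.exp (-ν * π ^ 2 * ((k : ℝ) + 1) ^ 2 * t) *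
          Real.sin (((k : ℝ) + 1) * π * x) * Real.cos (((k : ℝ) + 1) * π * y)| := by
        simpa only [Real.norm_eq_abs] using
          norm_tsum_le_tsum_norm
            (f := fun k : ℕ ↦ ((k : ℝ) + 1) * Real.exp (-ν * π ^ 2 * ((k : ℝ) + 1) ^ 2 * t) *
              Real.sin (((k : ℝ) + 1) * π * x) * Real.cos (((k : ℝ) + 1) * π * y))
            (by simpa only [Real.norm_eq_abs] using habsF)
      have hts : ∑' k : ℕ, |((k : ℝ) + 1) * Real.exp (-ν * π ^ 2 * ((k : ℝ) + 1) ^ 2 * t) *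
          Real.sin (((k : ℝ) + 1) * π * x) * Real.cos (((k : ℝ) + 1) * π * y)| ≤
          ∑' k : ℕ, (2 * Real.exp (-(ν * π ^ 2 * t) / 2)) * Real.exp (-((k:ℝ) + 1) / 2) :=
        Summable.tsum_le_tsum hbound habsF (summable_cg.mul_left _)
      have hts2 : ∑' k : ℕ, (2 * Real.exp (-(ν * π ^ 2 * t) / 2)) *
          Real.exp (-((k:ℝ) + 1) / 2) = 2 * Real.exp (-(ν * π ^ 2 * t) / 2) * Cg :=
        tsum_mul_left
      have := (hnorm.trans hts).trans hts2.le
      exact mul_le_mul_of_nonneg_left this (by positivity)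
    have hXpos : (0:ℝ) < ν * π ^ 2 * t := by positivity
    have hexpX : Real.exp (-(ν * π ^ 2 * t) / 2) ≤ 2 / (ν * π ^ 2 * t) := by
      rw [show -(ν * π ^ 2 * t) / 2 = -(ν * π ^ 2 * t / 2) by ring, Real.exp_neg]
      have h := Real.add_one_le_exp (ν * π ^ 2 * t / 2)
      have h2 : ν * π ^ 2 * t / 2 ≤ Real.exp (ν * π ^ 2 * t / 2) := by linarith
      calc (Real.exp (ν * π ^ 2 * t / 2))⁻¹ ≤ (ν * π ^ 2 * t / 2)⁻¹ :=
            inv_anti₀ (by positivity) h2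
      _ = 2 / (ν * π ^ 2 * t) := by rw [inv_div]
    have hexpge : Real.exp (-1) ≤ Real.exp (-(x - y) ^ 2 / (2 * (8 * ν) * t)) := by
      rw [Real.exp_le_exp, show (-1 : ℝ) = -(1:ℝ) by norm_num, neg_div, neg_le_neg_iff,
        div_le_one (by positivity)]
      have hsq : (x - y) ^ 2 ≤ 1 := by nlinarith
      have h16 : (1:ℝ) ≤ 2 * (8 * ν) * t := by
        nlinarith [Real.pi_lt_d2, mul_pos hν ht]
      linarith
    have h11 : Real.exp 1 * Real.exp (-1) = 1 := by
      rw [← Real.exp_add]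
      norm_num
    calc |dyHeatKernel ν t x y| ≤ 2 * π * (2 * Real.exp (-(ν * π ^ 2 * t) / 2) * Cg) := key
      _ ≤ 2 * π * (2 * (2 / (ν * π ^ 2 * t)) * Cg) :=
          mul_le_mul_of_nonneg_left
            (mul_le_mul_of_nonneg_right
              (mul_le_mul_of_nonneg_left hexpX (by norm_num)) Cg_nonneg)
            (by positivity)
      _ = 8 * Cg / (ν * π * t) := by
          field_simp
          ring
      _ = (8 * Real.exp 1 * Cg / (ν * π)) / t * Real.exp (-1) := by
          rw [show (8 * Real.exp 1 * Cg / (ν * π)) / t * Real.exp (-1)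
              = 8 * Cg / (ν * π * t) * (Real.exp 1 * Real.exp (-1)) by ring, h11, mul_one]
      _ ≤ c₁ / t * Real.exp (-1) := by
          gcongr
          rw [hc₁def]
          linarith
      _ ≤ c₁ / t * Real.exp (-(x - y) ^ 2 / (2 * (8 * ν) * t)) := by
          gcongr
end

section
/- Let u : [0,1] → ℝ be continuously differentiable with u(0) = u(1) = 0. Then ∫₀¹ u(x)⁴ dx ≤ 2 (∫₀¹ u(x)² dx)^{3/2} (∫₀¹ u′(x)² dx)^{1/2}; equivalently, |u|₄ ≤ 2^{1/4} |u|₂^{3/4} |u′|₂^{1/4}. (The one-dimensional Ladyzhenskaya/Gagliardo–Nirenberg interpolation inequality used in the energy estimates of Lemma 2.1.) -/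
/-!
Since `u 0 = 0`, the fundamental theorem of calculus applied to `u²` gives
`u(x)² ≤ 2 ∫₀¹ |u| |u'| ≤ 2 |u|₂ |u'|₂` for every `x ∈ [0,1]` (Cauchy–Schwarz).
Integrating `u⁴ ≤ (sup u²) u²` over `[0,1]` then gives `∫ u⁴ ≤ 2 |u|₂³ |u'|₂`.
-/

open MeasureTheory intervalIntegral

theorem integral_abs_mul_abs_le_L2_mul_L2 {α : Type*} [MeasurableSpace α] {μ : Measure α}
    {f g : α → ℝ} (hf : MemLp f 2 μ) (hg : MemLp g 2 μ) :
    ∫ x, |f x| * |g x| ∂μ ≤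
      (∫ x, f x ^ 2 ∂μ) ^ ((1:ℝ)/2) * (∫ x, g x ^ 2 ∂μ) ^ ((1:ℝ)/2) := by
  have hf' : MemLp f (ENNReal.ofReal 2) μ := by simpa using hf
  have hg' : MemLp g (ENNReal.ofReal 2) μ := by simpa using hg
  simpa only [Real.norm_eq_abs, Real.rpow_two, sq_abs] using
    integral_mul_norm_le_Lp_mul_Lq Real.HolderConjugate.two_two hf' hg'

theorem intervalIntegral.integral_abs_mul_abs_le_L2_mul_L2 {f g : ℝ → ℝ} {a b : ℝ}
    (hab : a ≤ b) (hf : Continuous f) (hg : Continuous g) :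
    ∫ x in a..b, |f x| * |g x| ≤
      (∫ x in a..b, f x ^ 2) ^ ((1:ℝ)/2) * (∫ x in a..b, g x ^ 2) ^ ((1:ℝ)/2) := by
  have memLp_two {h : ℝ → ℝ} (hh : Continuous h) :
      MemLp h 2 (volume.restrict (Set.Ioc a b)) :=
    (memLp_two_iff_integrable_sq hh.aestronglyMeasurable).2 ((hh.pow 2).intervalIntegrable a b).1
  simp only [integral_of_le hab]
  exact _root_.integral_abs_mul_abs_le_L2_mul_L2 (memLp_two hf) (memLp_two hg)

theorem sq_le_two_mul_integral_abs_mul_abs_deriv {u : ℝ → ℝ} {a b x : ℝ}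
    (hu : ContDiff ℝ 1 u) (ha : u a = 0) (hx : x ∈ Set.Icc a b) :
    u x ^ 2 ≤ 2 * ∫ t in a..b, |u t| * |deriv u t| := by
  have hderiv (t : ℝ) : HasDerivAt (fun t => u t ^ 2) (2 * u t * deriv u t) t := by
    simpa [mul_comm, mul_assoc, mul_left_comm] using
      ((hu.differentiable one_ne_zero) t).hasDerivAt.fun_pow 2
  have hcont : Continuous fun t => 2 * u t * deriv u t :=
    (continuous_const.mul hu.continuous).mul (hu.continuous_deriv le_rfl)
  calc u x ^ 2 = ∫ t in a..x, 2 * u t * deriv u t := by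
        rw [integral_eq_sub_of_hasDerivAt (fun t _ => hderiv t) (hcont.intervalIntegrable a x), ha]
        ring
    _ ≤ ∫ t in a..x, |2 * u t * deriv u t| :=
        (le_abs_self _).trans (abs_integral_le_integral_abs hx.1)
    _ ≤ ∫ t in a..b, |2 * u t * deriv u t| :=
        integral_mono_interval le_rfl hx.1 hx.2 (.of_forall fun t => abs_nonneg _)
          (hcont.abs.intervalIntegrable a b)
    _ = 2 * ∫ t in a..b, |u t| * |deriv u t| := by
        simp only [abs_mul, abs_two, mul_assoc, intervalIntegral.integral_const_mul]

theorem integral_pow_four_le_of_sq_le {u : ℝ → ℝ} {a b C : ℝ} (hab : a ≤ b)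
    (hu : Continuous u) (hC : ∀ x ∈ Set.Icc a b, u x ^ 2 ≤ C) :
    ∫ x in a..b, u x ^ 4 ≤ C * ∫ x in a..b, u x ^ 2 := by
  rw [← intervalIntegral.integral_const_mul]
  refine integral_mono_on hab ((hu.pow 4).intervalIntegrable a b)
    ((continuous_const.mul (hu.pow 2)).intervalIntegrable a b) fun x hx => ?_
  calc u x ^ 4 = u x ^ 2 * u x ^ 2 := by ring
    _ ≤ C * u x ^ 2 := mul_le_mul_of_nonneg_right (hC x hx) (sq_nonneg _)

theorem ladyzhenskaya_unit_interval_general (u : ℝ → ℝ)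
    (hu : ContDiff ℝ 1 u) (h0 : u 0 = 0) :
    ∫ x in (0:ℝ)..1, u x ^ 4 ≤
      2 * (∫ x in (0:ℝ)..1, u x ^ 2) ^ ((3:ℝ)/2) *
        (∫ x in (0:ℝ)..1, deriv u x ^ 2) ^ ((1:ℝ)/2) := by
  set A := ∫ x in (0:ℝ)..1, u x ^ 2
  set B := ∫ x in (0:ℝ)..1, deriv u x ^ 2
  have hA : 0 ≤ A := integral_nonneg zero_le_one fun x _ => sq_nonneg _
  have hsup (x : ℝ) (hx : x ∈ Set.Icc (0:ℝ) 1) :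
      u x ^ 2 ≤ 2 * A ^ ((1:ℝ)/2) * B ^ ((1:ℝ)/2) := by
    rw [mul_assoc]
    exact (sq_le_two_mul_integral_abs_mul_abs_deriv hu h0 hx).trans <|
      mul_le_mul_of_nonneg_left (intervalIntegral.integral_abs_mul_abs_le_L2_mul_L2 zero_le_one
        hu.continuous (hu.continuous_deriv le_rfl)) zero_le_two
  calc ∫ x in (0:ℝ)..1, u x ^ 4 ≤ 2 * A ^ ((1:ℝ)/2) * B ^ ((1:ℝ)/2) * A :=
        integral_pow_four_le_of_sq_le zero_le_one hu.continuous hsup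
    _ = 2 * A ^ ((3:ℝ)/2) * B ^ ((1:ℝ)/2) := by
        rw [show (3:ℝ)/2 = 1/2 + 1 by norm_num, Real.rpow_add' hA (by norm_num), Real.rpow_one]
        ring

/-- The one-dimensional Ladyzhenskaya (Gagliardo–Nirenberg) interpolation inequality on `[0,1]`
with Dirichlet boundary conditions: `∫₀¹ u⁴ ≤ 2 (∫₀¹ u²)^{3/2} (∫₀¹ (u')²)^{1/2}`. -/
theorem ladyzhenskaya_unit_interval (u : ℝ → ℝ)
    (hu : ContDiff ℝ 1 u) (h0 : u 0 = 0) (h1 : u 1 = 0) :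
    ∫ x in (0:ℝ)..1, u x ^ 4 ≤
      2 * (∫ x in (0:ℝ)..1, u x ^ 2) ^ ((3:ℝ)/2) *
        (∫ x in (0:ℝ)..1, deriv u x ^ 2) ^ ((1:ℝ)/2) :=
  ladyzhenskaya_unit_interval_general u hu h0
end

section
/- Let u, φ : [0,1] → ℝ be continuously differentiable with u(0) = u(1) = 0 and φ(0) = φ(1) = 0. Then |∫₀¹ u(x) u′(x) φ(x) dx| ≤ (1/√2) (∫₀¹ u² dx)^{3/4} (∫₀¹ (u′)² dx)^{1/4} (∫₀¹ (φ′)² dx)^{1/2}. In particular, |∫₀¹ u u′ φ dx| ≤ C |u|₂ |u′|₂ |φ′|₂ for some absolute constant C. (This is the bound |∂_x(u²)|_{H₀^{1*}} ≤ C |u|₂ |∇u|₂ on the Burgers nonlinearity used in estimate (A3') and Lemma 2.2.) -/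
/-!
Integrating by parts against `(u²)' = 2uu'` turns `∫ u u' φ` into `-(1/2) ∫ u² φ'`, so by
Cauchy–Schwarz it suffices to bound `‖u²‖₂ = ‖u‖₄²`. Since `u(0) = 0`,
`u(x)² = ∫₀ˣ 2uu' ≤ 2 ‖u‖₂ ‖u'‖₂` for every `x`, hence
`∫ u⁴ ≤ 2 ‖u‖₂ ‖u'‖₂ ∫ u² = 2 ‖u‖₂³ ‖u'‖₂`, which gives the exponents `3/4` and `1/4`.
-/

open MeasureTheory intervalIntegral

theorem abs_intervalIntegral_mul_le_sqrt_mul_sqrt {a b : ℝ} (hab : a ≤ b) {f g : ℝ → ℝ}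
    (hf : Continuous f) (hg : Continuous g) :
    |∫ x in a..b, f x * g x| ≤ √(∫ x in a..b, f x ^ 2) * √(∫ x in a..b, g x ^ 2) := by
  have memLp_two {h : ℝ → ℝ} (hh : Continuous h) :
      MemLp h (ENNReal.ofReal 2) (volume.restrict (Set.Ioc a b)) := by
    rw [ENNReal.ofReal_ofNat, memLp_two_iff_integrable_sq hh.aestronglyMeasurable]
    exact ((hh.pow 2).intervalIntegrable a b).1
  have holder := integral_mul_norm_le_Lp_mul_Lq Real.HolderConjugate.two_two
    (memLp_two hf) (memLp_two hg)
  simp only [Real.norm_eq_abs, ← abs_mul, Real.rpow_two, sq_abs, ← Real.sqrt_eq_rpow] at holder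
  rw [integral_of_le hab, integral_of_le hab, integral_of_le hab]
  exact MeasureTheory.abs_integral_le_integral_abs.trans holder

theorem Real.sqrt_sqrt_mul_sqrt_mul_self {A B : ℝ} (hA : 0 ≤ A) (hB : 0 ≤ B) :
    √(√A * √B * A) = A ^ ((3 : ℝ) / 4) * B ^ ((1 : ℝ) / 4) := by
  rw [Real.sqrt_eq_rpow, Real.sqrt_eq_rpow, Real.sqrt_eq_rpow, Real.mul_rpow (by positivity) hA,
    Real.mul_rpow (by positivity) (by positivity), ← Real.rpow_mul hA, ← Real.rpow_mul hB,
    mul_right_comm, ← Real.rpow_add' hA (by norm_num)]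
  norm_num

section C1

variable {a b : ℝ} {u : ℝ → ℝ}

theorem ContDiff.hasDerivAt_sq (hu : ContDiff ℝ 1 u) (x : ℝ) :
    HasDerivAt (fun y ↦ u y ^ 2) (2 * u x * deriv u x) x := by
  simpa [mul_comm, mul_assoc] using ((hu.differentiable one_ne_zero) x).hasDerivAt.fun_pow 2

theorem integral_mul_deriv_mul_eq_neg_half_integral_sq_mul_deriv {φ : ℝ → ℝ}
    (hu : ContDiff ℝ 1 u) (hφ : ContDiff ℝ 1 φ) (ha : u a = 0) (hb : u b = 0) :
    ∫ x in a..b, u x * deriv u x * φ x = -(1 / 2) * ∫ x in a..b, u x ^ 2 * deriv φ x := by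
  have parts := integral_mul_deriv_eq_deriv_mul (fun x _ ↦ hu.hasDerivAt_sq x)
    (fun x _ ↦ ((hφ.differentiable one_ne_zero) x).hasDerivAt)
    ((continuous_const.mul hu.continuous |>.mul (hu.continuous_deriv le_rfl)).intervalIntegrable
      a b)
    ((hφ.continuous_deriv le_rfl).intervalIntegrable a b)
  have two_mul : ∫ x in a..b, 2 * u x * deriv u x * φ x =
      2 * ∫ x in a..b, u x * deriv u x * φ x := by
    rw [← intervalIntegral.integral_const_mul]
    simp only [mul_assoc]
  rw [ha, hb, two_mul] at parts
  linarith

theorem sq_le_two_mul_sqrt_integral_sq_mul_sqrt_integral_deriv_sq {x : ℝ}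
    (hu : ContDiff ℝ 1 u) (ha : u a = 0) (hx : x ∈ Set.Icc a b) :
    u x ^ 2 ≤ 2 * (√(∫ t in a..b, u t ^ 2) * √(∫ t in a..b, deriv u t ^ 2)) := by
  have hu' := hu.continuous_deriv le_rfl
  have huu' : Continuous fun t ↦ 2 * u t * deriv u t :=
    continuous_const.mul hu.continuous |>.mul hu'
  calc u x ^ 2 = ∫ t in a..x, 2 * u t * deriv u t := by
        rw [integral_eq_sub_of_hasDerivAt (fun t _ ↦ hu.hasDerivAt_sq t)
          (huu'.intervalIntegrable _ _)]
        simp [ha]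
    _ ≤ ∫ t in a..x, |2 * u t * deriv u t| :=
        (le_abs_self _).trans (abs_integral_le_integral_abs hx.1)
    _ ≤ ∫ t in a..b, |2 * u t * deriv u t| :=
        integral_mono_interval le_rfl hx.1 hx.2 (ae_of_all _ fun t ↦ abs_nonneg _)
          (huu'.abs.intervalIntegrable _ _)
    _ = 2 * ∫ t in a..b, |u t| * |deriv u t| := by
        rw [← intervalIntegral.integral_const_mul]
        simp only [abs_mul, abs_two, mul_assoc]
    _ ≤ 2 * (√(∫ t in a..b, u t ^ 2) * √(∫ t in a..b, deriv u t ^ 2)) := by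
        gcongr
        simpa only [sq_abs] using (le_abs_self _).trans
          (abs_intervalIntegral_mul_le_sqrt_mul_sqrt (hx.1.trans hx.2) hu.continuous.abs hu'.abs)

theorem integral_sq_sq_le (hab : a ≤ b) (hu : ContDiff ℝ 1 u) (ha : u a = 0) :
    ∫ x in a..b, (u x ^ 2) ^ 2 ≤
      2 * (√(∫ x in a..b, u x ^ 2) * √(∫ x in a..b, deriv u x ^ 2)) * ∫ x in a..b, u x ^ 2 := by
  rw [← intervalIntegral.integral_const_mul]
  refine integral_mono_on hab (((hu.continuous.pow 2).pow 2).intervalIntegrable _ _)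
    ((continuous_const.mul (hu.continuous.pow 2)).intervalIntegrable _ _) fun x hx ↦ ?_
  rw [sq (u x ^ 2)]
  exact mul_le_mul_of_nonneg_right
    (sq_le_two_mul_sqrt_integral_sq_mul_sqrt_integral_deriv_sq hu ha hx) (sq_nonneg _)

theorem sqrt_integral_sq_sq_le (hab : a ≤ b) (hu : ContDiff ℝ 1 u) (ha : u a = 0) :
    √(∫ x in a..b, (u x ^ 2) ^ 2) ≤
      √2 * ((∫ x in a..b, u x ^ 2) ^ ((3 : ℝ) / 4) *
        (∫ x in a..b, deriv u x ^ 2) ^ ((1 : ℝ) / 4)) := by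
  have hA : 0 ≤ ∫ x in a..b, u x ^ 2 := integral_nonneg hab fun x _ ↦ sq_nonneg _
  have hB : 0 ≤ ∫ x in a..b, deriv u x ^ 2 := integral_nonneg hab fun x _ ↦ sq_nonneg _
  calc √(∫ x in a..b, (u x ^ 2) ^ 2)
      ≤ √(2 * (√(∫ x in a..b, u x ^ 2) * √(∫ x in a..b, deriv u x ^ 2)) *
          ∫ x in a..b, u x ^ 2) :=
        Real.sqrt_le_sqrt (integral_sq_sq_le hab hu ha)
    _ = _ := by rw [mul_assoc, Real.sqrt_mul zero_le_two, Real.sqrt_sqrt_mul_sqrt_mul_self hA hB]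

end C1

theorem burgers_nonlinearity_dual_bound_general (u φ : ℝ → ℝ)
    (hu : ContDiff ℝ 1 u) (hu0 : u 0 = 0) (hu1 : u 1 = 0)
    (hφ : ContDiff ℝ 1 φ) :
    |∫ x in (0:ℝ)..1, u x * deriv u x * φ x| ≤
      (1 / Real.sqrt 2) * (∫ x in (0:ℝ)..1, u x ^ 2) ^ ((3:ℝ)/4) *
        (∫ x in (0:ℝ)..1, deriv u x ^ 2) ^ ((1:ℝ)/4) *
        (∫ x in (0:ℝ)..1, deriv φ x ^ 2) ^ ((1:ℝ)/2) := by
  calc |∫ x in (0:ℝ)..1, u x * deriv u x * φ x|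
      = 1 / 2 * |∫ x in (0:ℝ)..1, u x ^ 2 * deriv φ x| := by
        rw [integral_mul_deriv_mul_eq_neg_half_integral_sq_mul_deriv hu hφ hu0 hu1, abs_mul]
        norm_num
    _ ≤ 1 / 2 * (√(∫ x in (0:ℝ)..1, (u x ^ 2) ^ 2) * √(∫ x in (0:ℝ)..1, deriv φ x ^ 2)) := by
        gcongr
        exact abs_intervalIntegral_mul_le_sqrt_mul_sqrt zero_le_one (hu.continuous.pow 2)
          (hφ.continuous_deriv le_rfl)
    _ ≤ 1 / 2 * (√2 * ((∫ x in (0:ℝ)..1, u x ^ 2) ^ ((3 : ℝ) / 4) *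
          (∫ x in (0:ℝ)..1, deriv u x ^ 2) ^ ((1 : ℝ) / 4)) *
          √(∫ x in (0:ℝ)..1, deriv φ x ^ 2)) := by
        gcongr
        exact sqrt_integral_sq_sq_le zero_le_one hu hu0
    _ = _ := by
        rw [Real.sqrt_eq_rpow (∫ x in (0:ℝ)..1, deriv φ x ^ 2)]
        field_simp
        simp

/-- The bound on the Burgers nonlinearity used in estimate (A3') and Lemma 2.2:
for `u, φ` continuously differentiable and vanishing at the endpoints of `[0,1]`,
`|∫₀¹ u u' φ| ≤ (1/√2) (∫₀¹ u²)^{3/4} (∫₀¹ (u')²)^{1/4} (∫₀¹ (φ')²)^{1/2}`. -/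
theorem burgers_nonlinearity_dual_bound (u φ : ℝ → ℝ)
    (hu : ContDiff ℝ 1 u) (hu0 : u 0 = 0) (hu1 : u 1 = 0)
    (hφ : ContDiff ℝ 1 φ) (hφ0 : φ 0 = 0) (hφ1 : φ 1 = 0) :
    |∫ x in (0:ℝ)..1, u x * deriv u x * φ x| ≤
      (1 / Real.sqrt 2) * (∫ x in (0:ℝ)..1, u x ^ 2) ^ ((3:ℝ)/4) *
        (∫ x in (0:ℝ)..1, deriv u x ^ 2) ^ ((1:ℝ)/4) *
        (∫ x in (0:ℝ)..1, deriv φ x ^ 2) ^ ((1:ℝ)/2) :=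
  burgers_nonlinearity_dual_bound_general u φ hu hu0 hu1 hφ
end
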